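/- arXiv:1108.1893 — 8 statements merged into one kernel-verified Lean document; each statement's English description precedes it below -/
import Mathlib

section
/- For all positive integers n, the sum over k from 1 to n of (3k-2)/(k * C(2k,k)) equals 1 - 1/C(2n,n), where C(2k,k) denotes the central binomial coefficient. -/
/-!
The summand is the telescoping difference `1 / C(2k-2, k-1) - 1 / C(2k, k)`, a consequence of
`(k + 1) C(2k+2, k+1) = 2 (2k + 1) C(2k, k)`.
-/

open Nat

theorem one_div_centralBinom_sub_one_div_centralBinom_succ {K : Type*} [Field K] [CharZero K]
    (k : ℕ) :
    1 / (centralBinom k : K) - 1 / centralBinom (k + 1)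
      = (3 * (k + 1 : ℕ) - 2) / ((k + 1 : ℕ) * centralBinom (k + 1)) := by
  have hrec : ((k + 1 : ℕ) : K) * centralBinom (k + 1) = 2 * (2 * k + 1) * centralBinom k := by
    exact_mod_cast succ_mul_centralBinom_succ k
  have hk : (centralBinom k : K) ≠ 0 := by exact_mod_cast (centralBinom_pos k).ne'
  have hk' : (centralBinom (k + 1) : K) ≠ 0 := by exact_mod_cast (centralBinom_pos _).ne'
  have hk1 : ((k + 1 : ℕ) : K) ≠ 0 := by exact_mod_cast k.succ_ne_zero
  field_simp
  push_cast at hrec ⊢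
  linear_combination hrec

theorem stmt_0_general (n : ℕ) :
    ∑ k ∈ Finset.Icc 1 n, ((3 * k - 2 : ℚ)) / (k * (Nat.choose (2 * k) k : ℚ))
      = 1 - 1 / (Nat.choose (2 * n) n : ℚ) := by
  induction n with
  | zero => simp
  | succ n ih =>
    have step := one_div_centralBinom_sub_one_div_centralBinom_succ (K := ℚ) n
    rw [centralBinom, centralBinom] at step
    rw [Finset.sum_Icc_succ_top (by omega), ih, ← step]
    ring

theorem stmt_0 (n : ℕ) (hn : 1 ≤ n) :
    ∑ k ∈ Finset.Icc 1 n, ((3 * k - 2 : ℚ)) / (k * (Nat.choose (2 * k) k : ℚ))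
      = 1 - 1 / (Nat.choose (2 * n) n : ℚ) :=
  stmt_0_general n
end

section
/- For all positive integers n and all values t (in a commutative ring, e.g. rationals), the sum over k from 0 to n of C(n,k)*C(n+k-1,k)/C(2k,k) * (-t)^k equals (-1)^n * v_n(t-2) / 2, where v_n is the Lucas sequence of the second kind: v_0(x)=2, v_1(x)=x, v_n(x)=x*v_{n-1}(x)-v_{n-2}(x). -/
/-!
Let `b_n(x) = ∑ₖ C(n+k, 2k) xᵏ` be the Morgan–Voyce polynomial. Pascal's rule, applied twice,
gives `b_{n+2} = (2 + x) b_{n+1} - b_n`, which is the Lucas recurrence at `2 + x`; comparing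
initial values, `v_n(2 + x) = b_n(x) + b_{n-1}(x)` for `n ≥ 1`. On the other hand
`C(n,k) C(n+k-1,k) / C(2k,k) = (C(n+k,2k) + C(n-1+k,2k)) / 2`, so the sum is
`(b_n(-t) + b_{n-1}(-t)) / 2 = v_n(2 - t) / 2 = (-1)ⁿ v_n(t - 2) / 2`.
-/

def lucasV (x : ℚ) : ℕ → ℚ
  | 0 => 2
  | 1 => x
  | n + 2 => x * lucasV x (n + 1) - lucasV x n

open Finset

theorem Nat.choose_add_two_add_choose (a r : ℕ) :
    (a + 2).choose (r + 2) + a.choose (r + 2) = 2 * (a + 1).choose (r + 2) + a.choose r := by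
  have h₁ : (a + 2).choose (r + 2) = (a + 1).choose (r + 1) + (a + 1).choose (r + 2) :=
    Nat.choose_succ_succ' (a + 1) (r + 1)
  have h₂ : (a + 1).choose (r + 2) = a.choose (r + 1) + a.choose (r + 2) :=
    Nat.choose_succ_succ' a (r + 1)
  have h₃ := Nat.choose_succ_succ' a r
  omega

theorem cast_choose_mul_choose_div_choose_two_mul {K : Type*} [Field K] [CharZero K] {m k : ℕ}
    (hk : k ≤ m + 1) :
    ((m + 1).choose k : K) * (m + k).choose k / (2 * k).choose k
      = ((m + 1 + k).choose (2 * k) + (m + k).choose (2 * k)) / 2 := by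
  have h₁ := Nat.choose_mul (n := m + 1 + k) (k := 2 * k) (s := k) (by omega)
  have h₂ := Nat.choose_mul (n := m + k) (k := 2 * k) (s := k) (by omega)
  have h₃ := Nat.choose_mul_succ_eq (m + k) k
  have h₄ := Nat.choose_mul_succ_eq m k
  rw [show m + 1 + k - k = m + 1 by omega, show 2 * k - k = k by omega] at h₁
  rw [show m + k - k = m by omega, show 2 * k - k = k by omega] at h₂
  rw [show m + k + 1 - k = m + 1 by omega, show m + k + 1 = m + 1 + k by omega] at h₃
  have hc : ((2 * k).choose k : K) ≠ 0 := by exact_mod_cast (Nat.choose_pos (by omega)).ne'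
  have hm : (m + 1 : K) ≠ 0 := Nat.cast_add_one_ne_zero m
  rw [div_eq_div_iff hc two_ne_zero]
  apply mul_left_cancel₀ hm
  rw [← Nat.cast_inj (R := K)] at h₁ h₂ h₃ h₄
  push_cast [Nat.cast_sub hk] at h₁ h₂ h₃ h₄
  -- After multiplying by `m + 1`, `h₃` and `h₄` turn `h₁ + h₂` into a multiple of
  -- `C(m+1,k) C(m+k,k)`, with factors `m + 1 + k` and `m + 1 - k` adding up to `2 (m + 1)`.
  linear_combination (-(m + 1 : K)) * h₁ - (m + 1 : K) * h₂
    + ((m + 1).choose k : K) * h₃ - ((m + k).choose k : K) * h₄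

section MorganVoyce

variable {R : Type*} [CommRing R]

def morganVoyce (x : R) (n : ℕ) : R :=
  ∑ k ∈ range (n + 1), ((n + k).choose (2 * k) : R) * x ^ k

theorem morganVoyce_zero (x : R) : morganVoyce x 0 = 1 := by
  simp [morganVoyce]

theorem morganVoyce_one (x : R) : morganVoyce x 1 = 1 + x := by
  simp [morganVoyce, sum_range_succ]

theorem morganVoyce_eq_sum_range (x : R) {n N : ℕ} (h : n + 1 ≤ N) :
    morganVoyce x n = ∑ k ∈ range N, ((n + k).choose (2 * k) : R) * x ^ k := by
  refine sum_subset (range_subset_range.2 h) fun k _ hk => ?_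
  rw [Nat.choose_eq_zero_of_lt (by simp at hk; omega), Nat.cast_zero, zero_mul]

theorem morganVoyce_add_two (x : R) (n : ℕ) :
    morganVoyce x (n + 2) = (2 + x) * morganVoyce x (n + 1) - morganVoyce x n := by
  have hx : x * morganVoyce x (n + 1)
      = ∑ j ∈ range (n + 2), ((n + 1 + j).choose (2 * j) : R) * x ^ (j + 1) := by
    rw [morganVoyce, mul_sum]
    exact sum_congr rfl fun j _ => by ring
  suffices morganVoyce x (n + 2) + morganVoyce x n - 2 * morganVoyce x (n + 1)
      = x * morganVoyce x (n + 1) by linear_combination this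
  rw [hx, morganVoyce_eq_sum_range x (n := n) (N := n + 3) (by omega),
    morganVoyce_eq_sum_range x (n := n + 1) (N := n + 3) (by omega), morganVoyce, mul_sum,
    ← sum_add_distrib, ← sum_sub_distrib, sum_range_succ']
  simp only [add_zero, mul_zero, Nat.choose_zero_right, pow_zero, Nat.cast_one, mul_one,
    one_add_one_eq_two, sub_self]
  refine sum_congr rfl fun j _ => ?_
  have h : ((n + 2 + (j + 1)).choose (2 * (j + 1)) + (n + (j + 1)).choose (2 * (j + 1)) : R)
      = 2 * (n + 1 + (j + 1)).choose (2 * (j + 1)) + (n + 1 + j).choose (2 * j) := by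
    rw [show n + 2 + (j + 1) = n + j + 1 + 2 by ring, show n + (j + 1) = n + j + 1 by ring,
      show n + 1 + (j + 1) = n + j + 1 + 1 by ring, show n + 1 + j = n + j + 1 by ring,
      show 2 * (j + 1) = 2 * j + 2 by ring]
    exact_mod_cast congrArg (Nat.cast : ℕ → R) (Nat.choose_add_two_add_choose (n + j + 1) (2 * j))
  linear_combination x ^ (j + 1) * h

end MorganVoyce

theorem lucasV_neg (x : ℚ) : ∀ n, lucasV (-x) n = (-1) ^ n * lucasV x n
  | 0 => by simp [lucasV]
  | 1 => by simp [lucasV]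
  | n + 2 => by rw [lucasV, lucasV, lucasV_neg x (n + 1), lucasV_neg x n]; ring

theorem lucasV_two_add_succ (x : ℚ) :
    ∀ n, lucasV (2 + x) (n + 1) = morganVoyce x (n + 1) + morganVoyce x n
  | 0 => by
    rw [zero_add, morganVoyce_one, morganVoyce_zero, lucasV]
    ring
  | 1 => by
    rw [morganVoyce_add_two x 0, zero_add, morganVoyce_one, morganVoyce_zero, lucasV, lucasV,
      lucasV]
    ring
  | n + 2 => by
    rw [lucasV, lucasV_two_add_succ x (n + 1), lucasV_two_add_succ x n,
      morganVoyce_add_two x (n + 1), morganVoyce_add_two x n]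
    ring

theorem stmt_1 (n : ℕ) (hn : 1 ≤ n) (t : ℚ) :
    ∑ k ∈ Finset.range (n + 1),
        (Nat.choose n k : ℚ) * (Nat.choose (n + k - 1) k : ℚ)
          / (Nat.choose (2 * k) k : ℚ) * (-t) ^ k
      = (-1) ^ n * lucasV (t - 2) n / 2 := by
  obtain ⟨m, rfl⟩ : ∃ m, n = m + 1 := ⟨n - 1, by omega⟩
  have hsign : (-1) ^ (m + 1) * lucasV (t - 2) (m + 1) = lucasV (2 + -t) (m + 1) := by
    rw [show 2 + -t = -(t - 2) by ring, lucasV_neg]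
  rw [hsign, lucasV_two_add_succ, morganVoyce_eq_sum_range (-t) (n := m) (N := m + 2) (by omega),
    morganVoyce, add_div, sum_div, sum_div, ← sum_add_distrib]
  refine sum_congr rfl fun k hk => ?_
  rw [show m + 1 + k - 1 = m + k by omega,
    cast_choose_mul_choose_div_choose_two_mul (mem_range_succ_iff.1 hk)]
  ring
end

section
/- For every positive integer n, the sum over k from 1 to n of C(n,k)*C(n+k-1,k)/C(2k,k) * (-t)^k / k equals (v_n(2-t) - 2)/(2n) + the sum over k from 1 to n-1 of (v_k(2-t) - 2)/k, as an identity of polynomials in t over ℚ. -/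
open Finset

-- The coefficient of `yᵏ` in `v_n(2 + y)`; truncated subtraction makes `lucasCoeff 0 0 = 2`.
def lucasCoeff (n k : ℕ) : ℕ := (n + k).choose (2 * k) + (n + k - 1).choose (2 * k)

lemma lucasCoeff_succ_left (n k : ℕ) :
    lucasCoeff (n + 1) k = (n + k + 1).choose (2 * k) + (n + k).choose (2 * k) := by
  rw [lucasCoeff, Nat.add_right_comm, Nat.add_sub_cancel]

lemma lucasCoeff_succ_right (n k : ℕ) :
    lucasCoeff n (k + 1) = (n + k + 1).choose (2 * k + 2) + (n + k).choose (2 * k + 2) := by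
  rw [lucasCoeff, ← add_assoc, Nat.add_sub_cancel, mul_add, mul_one]

lemma lucasCoeff_zero_right (n : ℕ) : lucasCoeff n 0 = 2 := by
  simp [lucasCoeff]

lemma lucasCoeff_eq_zero_of_lt {n k : ℕ} (h : n < k) : lucasCoeff n k = 0 := by
  rw [lucasCoeff, Nat.choose_eq_zero_of_lt (by omega), Nat.choose_eq_zero_of_lt (by omega)]

lemma lucasCoeff_add_two_succ (n k : ℕ) :
    lucasCoeff (n + 2) (k + 1) + lucasCoeff n (k + 1)
      = 2 * lucasCoeff (n + 1) (k + 1) + lucasCoeff (n + 1) k := by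
  simp only [lucasCoeff_succ_right, lucasCoeff_succ_left, show n + 2 + k = n + k + 2 by ring,
    show n + 1 + k = n + k + 1 by ring, show n + k + 1 + 1 = n + k + 2 by ring]
  have h₁ : (n + k + 2 + 1).choose (2 * k + 2)
      = (n + k + 2).choose (2 * k + 1) + (n + k + 2).choose (2 * k + 2) :=
    Nat.choose_succ_succ' _ _
  have h₂ : (n + k + 2).choose (2 * k + 1)
      = (n + k + 1).choose (2 * k) + (n + k + 1).choose (2 * k + 1) :=
    Nat.choose_succ_succ' _ _
  have h₃ : (n + k + 1).choose (2 * k + 1)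
      = (n + k).choose (2 * k) + (n + k).choose (2 * k + 1) :=
    Nat.choose_succ_succ' _ _
  have h₄ : (n + k + 1).choose (2 * k + 2)
      = (n + k).choose (2 * k + 1) + (n + k).choose (2 * k + 2) :=
    Nat.choose_succ_succ' _ _
  omega

theorem lucasV_two_add_eq_sum (y : ℚ) {n N : ℕ} (h : n < N) :
    lucasV (2 + y) n = ∑ k ∈ range N, (lucasCoeff n k : ℚ) * y ^ k := by
  induction n using Nat.twoStepInduction generalizing N with
  | zero =>
    obtain ⟨M, rfl⟩ : ∃ M, N = M + 1 := ⟨N - 1, by omega⟩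
    rw [sum_range_succ', sum_eq_zero fun k _ => by rw [lucasCoeff_eq_zero_of_lt k.succ_pos]; simp]
    simp [lucasV, lucasCoeff_zero_right]
  | one =>
    obtain ⟨M, rfl⟩ : ∃ M, N = M + 2 := ⟨N - 2, by omega⟩
    rw [sum_range_succ', sum_range_succ',
      sum_eq_zero fun k _ => by rw [lucasCoeff_eq_zero_of_lt (by omega : 1 < k + 1 + 1)]; simp,
      show lucasCoeff 1 1 = 1 by decide, lucasCoeff_zero_right, lucasV]
    norm_num
    ring
  | more n ihₙ ihₙ₁ =>
    obtain ⟨M, rfl⟩ : ∃ M, N = M + 1 := ⟨N - 1, by omega⟩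
    have hcoeff (k : ℕ) : (lucasCoeff (n + 2) (k + 1) : ℚ) * y ^ (k + 1)
        = 2 * ((lucasCoeff (n + 1) (k + 1) : ℚ) * y ^ (k + 1))
          + y * ((lucasCoeff (n + 1) k : ℚ) * y ^ k)
          - (lucasCoeff n (k + 1) : ℚ) * y ^ (k + 1) := by
      have := congrArg (Nat.cast (R := ℚ)) (lucasCoeff_add_two_succ n k)
      push_cast at this
      rw [pow_succ]
      linear_combination y ^ k * y * this
    have h₁ := ihₙ₁ (N := M + 1) (by omega)
    have h₁' := ihₙ₁ (N := M) (by omega)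
    have h₀ := ihₙ (N := M + 1) (by omega)
    rw [sum_range_succ'] at h₁ h₀ ⊢
    simp only [hcoeff, sum_add_distrib, sum_sub_distrib, ← mul_sum, lucasCoeff_zero_right]
      at h₁ h₀ ⊢
    rw [lucasV]
    push_cast at h₁ h₀ ⊢
    linear_combination 2 * h₁ + y * h₁' - h₀

lemma succ_mul_lucasCoeff_succ (m j : ℕ) :
    (j + 1) * lucasCoeff m (j + 1) = m * (m + j).choose (2 * j + 1) := by
  have hpascal : lucasCoeff m (j + 1)
      = (m + j).choose (2 * j + 1) + 2 * (m + j).choose (2 * j + 2) := by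
    rw [lucasCoeff_succ_right, Nat.choose_succ_succ' (m + j) (2 * j + 1)]
    ring
  have hstep := Nat.choose_succ_right_eq (m + j) (2 * j + 1)
  rcases le_or_gt (2 * j + 1) (m + j) with h | h
  · obtain ⟨d, rfl⟩ : ∃ d, m = j + 1 + d := ⟨m - (j + 1), by omega⟩
    rw [show j + 1 + d + j - (2 * j + 1) = d by omega] at hstep
    rw [hpascal]
    linear_combination hstep
  · rw [hpascal, Nat.choose_eq_zero_of_lt h, Nat.choose_eq_zero_of_lt (by omega)]
    simp

lemma lucasCoeff_succ_div (m j : ℕ) :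
    (lucasCoeff m (j + 1) : ℚ) / m = ((m + j).choose (2 * j + 1) : ℚ) / (j + 1) := by
  rcases Nat.eq_zero_or_pos m with rfl | hm
  · simp [Nat.choose_eq_zero_of_lt (by omega : j < 2 * j + 1)]
  · rw [div_eq_div_iff (by positivity) (by positivity)]
    exact_mod_cast by linarith [succ_mul_lucasCoeff_succ m j]

theorem lucasV_two_add_sub_two_div (y : ℚ) {m N : ℕ} (h : m ≤ N) :
    (lucasV (2 + y) m - 2) / m
      = ∑ k ∈ Icc 1 N, ((m + k - 1).choose (2 * k - 1) : ℚ) / k * y ^ k := by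
  rw [lucasV_two_add_eq_sum y (Nat.lt_succ_of_le h), sum_range_succ', lucasCoeff_zero_right,
    ← Ico_add_one_right_eq_Icc, sum_Ico_eq_sum_range, Nat.add_sub_cancel]
  simp only [Nat.cast_ofNat, pow_zero, mul_one, add_sub_cancel_right, sum_div]
  refine sum_congr rfl fun j _ => ?_
  rw [mul_div_right_comm, lucasCoeff_succ_div, add_comm 1 j, ← add_assoc, Nat.add_sub_cancel,
    show 2 * (j + 1) - 1 = 2 * j + 1 by omega]
  push_cast
  ring

lemma sum_range_add_choose_two_mul_add_one (n j : ℕ) :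
    ∑ m ∈ range n, (m + j).choose (2 * j + 1) = (n + j).choose (2 * j + 2) := by
  induction n with
  | zero => simp [Nat.choose_eq_zero_of_lt (by omega : j < 2 * j + 2)]
  | succ n ih =>
    rw [sum_range_succ, ih, show n + 1 + j = n + j + 1 by ring,
      Nat.choose_succ_succ' (n + j) (2 * j + 1)]
    ring

lemma two_mul_succ_mul_choose_mul_choose (n j : ℕ) :
    2 * (j + 1) * (n.choose (j + 1) * (n + j).choose (j + 1))
      = n * (n + j).choose (2 * j + 1) * (2 * j + 2).choose (j + 1) := by
  have hcentral : (2 * j + 2).choose (j + 1) = 2 * (2 * j + 1).choose (j + 1) := by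
    rw [Nat.choose_succ_succ', Nat.choose_symm_half]
    ring
  rcases n with _ | p
  · simp
  · have htrinomial :=
      Nat.choose_mul (n := p + 1 + j) (k := 2 * j + 1) (by omega : j + 1 ≤ 2 * j + 1)
    rw [show p + 1 + j - (j + 1) = p by omega, show 2 * j + 1 - (j + 1) = j by omega] at htrinomial
    have habsorb := Nat.add_one_mul_choose_eq p j
    rw [hcentral]
    linear_combination
      (2 * (p + 1)) * htrinomial.symm + 2 * (p + 1 + j).choose (j + 1) * habsorb.symm

theorem choose_mul_choose_div_choose_two_mul (n : ℕ) {k : ℕ} (hk : 1 ≤ k) :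
    (n.choose k * (n + k - 1).choose k / (2 * k).choose k : ℚ)
      = ((n + k - 1).choose (2 * k - 1) : ℚ) / 2
        + ∑ m ∈ range n, ((m + k - 1).choose (2 * k - 1) : ℚ) := by
  obtain ⟨j, rfl⟩ : ∃ j, k = j + 1 := ⟨k - 1, by omega⟩
  simp only [← add_assoc, Nat.add_sub_cancel, show 2 * (j + 1) = 2 * j + 2 by omega,
    show 2 * j + 2 - 1 = 2 * j + 1 by omega]
  rw [← Nat.cast_sum, sum_range_add_choose_two_mul_add_one,
    div_eq_iff (by exact_mod_cast (Nat.choose_pos (by omega)).ne')]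
  have hratio := congrArg (Nat.cast (R := ℚ)) (two_mul_succ_mul_choose_mul_choose n j)
  have hcoeff := congrArg (Nat.cast (R := ℚ)) (succ_mul_lucasCoeff_succ n j)
  rw [lucasCoeff_succ_right, Nat.choose_succ_succ' (n + j) (2 * j + 1)] at hcoeff
  push_cast at hratio hcoeff
  apply mul_left_cancel₀ (by positivity : ((j : ℚ) + 1) ≠ 0)
  linear_combination hratio / 2 - ((2 * j + 2).choose (j + 1) : ℚ) / 2 * hcoeff

theorem stmt_2_general (n : ℕ) (t : ℚ) :
    ∑ k ∈ Finset.Icc 1 n,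
        (Nat.choose n k : ℚ) * (Nat.choose (n + k - 1) k : ℚ)
          / (Nat.choose (2 * k) k : ℚ) * (-t) ^ k / k
      = (lucasV (2 - t) n - 2) / (2 * n)
        + ∑ k ∈ Finset.Icc 1 (n - 1), (lucasV (2 - t) k - 2) / k := by
  have hterm : ∀ k ∈ Icc 1 n,
      (n.choose k : ℚ) * (n + k - 1).choose k / (2 * k).choose k * (-t) ^ k / k
        = ((n + k - 1).choose (2 * k - 1) : ℚ) / k * (-t) ^ k / 2
          + ∑ m ∈ range n, ((m + k - 1).choose (2 * k - 1) : ℚ) / k * (-t) ^ k := by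
    intro k hk
    rw [choose_mul_choose_div_choose_two_mul n (mem_Icc.1 hk).1, add_mul, add_div, sum_mul, sum_div]
    congr 1
    · ring
    · exact sum_congr rfl fun m _ => by ring
  have hlucas {m : ℕ} (hm : m ≤ n) := lucasV_two_add_sub_two_div (-t) hm
  rw [sum_congr rfl hterm, sum_add_distrib, ← sum_div, sum_comm, ← hlucas le_rfl,
    sum_congr rfl fun m hm => (hlucas (mem_range.1 hm).le).symm, ← sub_eq_add_neg, div_div,
    mul_comm (n : ℚ)]
  congr 1
  refine sum_subset (fun m hm => ?_) (fun m hm hm' => ?_) |>.symm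
  · simp only [mem_Icc, mem_range] at hm ⊢; omega
  · -- the term `m = 0` is `(v₀ - 2) / 0 = 0`
    obtain rfl : m = 0 := by simp only [mem_Icc, mem_range] at hm hm'; omega
    simp

theorem stmt_2 (n : ℕ) (hn : 1 ≤ n) (t : ℚ) :
    ∑ k ∈ Finset.Icc 1 n,
        (Nat.choose n k : ℚ) * (Nat.choose (n + k - 1) k : ℚ)
          / (Nat.choose (2 * k) k : ℚ) * (-t) ^ k / k
      = (lucasV (2 - t) n - 2) / (2 * n)
        + ∑ k ∈ Finset.Icc 1 (n - 1), (lucasV (2 - t) k - 2) / k :=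
  stmt_2_general n t
end

section
/- For every odd prime p and every integer k with 1 ≤ k ≤ p-1, the rational number (-1)^{k-1} * C(p,k) * C(p+k-1,k) equals (p^2/k^2) * the product over m from 1 to k-1 of (1 - p^2/m^2). -/
/-!
Both sides, as functions of `k`, equal `p²` at `k = 1`, and both are multiplied by
`(k² - p²) / (k + 1)²` when `k` is replaced by `k + 1`: on the left this comes from
`C(p, k + 1) (k + 1) = C(p, k) (p - k)` and `C(p + k, k + 1) (k + 1) = (p + k) C(p + k - 1, k)`.
-/

open Finset

theorem cast_choose_succ_mul {R : Type*} [CommRing R] (n k : ℕ) :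
    (n.choose (k + 1) : R) * (k + 1) = n.choose k * (n - k) := by
  rcases le_or_gt k n with hkn | hnk
  · have h := congr_arg ((↑) : ℕ → R) (Nat.choose_succ_right_eq n k)
    push_cast [Nat.cast_sub hkn] at h
    exact h
  · simp [Nat.choose_eq_zero_of_lt hnk, Nat.choose_eq_zero_of_lt (hnk.trans k.lt_succ_self)]

theorem neg_one_pow_mul_choose_mul_choose_add {K : Type*} [Field K] [CharZero K] (p n : ℕ) :
    (-1 : K) ^ n * p.choose (n + 1) * (p + n).choose (n + 1)
      = (p : K) ^ 2 / (n + 1) ^ 2 * ∏ m ∈ Icc 1 n, (1 - (p : K) ^ 2 / m ^ 2) := by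
  induction n with
  | zero => simp [sq]
  | succ n ih =>
    have lower : (p.choose (n + 2) : K) * (n + 2) = p.choose (n + 1) * (p - (n + 1)) := by
      exact_mod_cast cast_choose_succ_mul p (n + 1)
    have upper : ((p + (n + 1)).choose (n + 2) : K) * (n + 2)
        = (p + n + 1) * (p + n).choose (n + 1) := by
      exact_mod_cast (Nat.add_one_mul_choose_eq (p + n) (n + 1)).symm
    have hn2 : (n + 2 : K) ≠ 0 := by exact_mod_cast (n + 1).succ_ne_zero
    rw [prod_Icc_succ_top (by omega), ← mul_left_inj' (pow_ne_zero 2 hn2)]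
    push_cast [add_assoc, one_add_one_eq_two]
    calc (-1 : K) ^ (n + 1) * p.choose (n + 2) * (p + (n + 1)).choose (n + 2) * (n + 2) ^ 2
        = -(-1) ^ n * (p.choose (n + 2) * (n + 2)) * ((p + (n + 1)).choose (n + 2) * (n + 2)) := by
          ring
      _ = (-1) ^ n * p.choose (n + 1) * (p + n).choose (n + 1) * ((n + 1) ^ 2 - p ^ 2) := by
          rw [lower, upper]; ring
      _ = p ^ 2 / (n + 1) ^ 2 * (∏ m ∈ Icc 1 n, (1 - (p : K) ^ 2 / m ^ 2))
            * ((n + 1) ^ 2 - p ^ 2) := by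
          rw [ih]
      _ = _ := by field_simp

theorem stmt_3_general (p : ℕ) (k : ℕ)
    (hk1 : 1 ≤ k) :
    ((-1 : ℚ)) ^ (k - 1) * (Nat.choose p k : ℚ) * (Nat.choose (p + k - 1) k : ℚ)
      = ((p : ℚ) ^ 2 / (k : ℚ) ^ 2)
        * ∏ m ∈ Finset.Icc 1 (k - 1), (1 - (p : ℚ) ^ 2 / (m : ℚ) ^ 2) := by
  obtain ⟨n, rfl⟩ := Nat.exists_eq_add_of_le' hk1
  simpa [← add_assoc] using neg_one_pow_mul_choose_mul_choose_add (K := ℚ) p n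

theorem stmt_3 (p : ℕ) (hp : p.Prime) (hodd : Odd p) (k : ℕ)
    (hk1 : 1 ≤ k) (hk2 : k ≤ p - 1) :
    ((-1 : ℚ)) ^ (k - 1) * (Nat.choose p k : ℚ) * (Nat.choose (p + k - 1) k : ℚ)
      = ((p : ℚ) ^ 2 / (k : ℚ) ^ 2)
        * ∏ m ∈ Finset.Icc 1 (k - 1), (1 - (p : ℚ) ^ 2 / (m : ℚ) ^ 2) :=
  stmt_3_general p k hk1
end

section
/- For every positive integer N, 4*∑_{k=1}^N 1/(k^4 C(2k,k)) = 3*∑_{k=1}^N H_{k-1}(2)/(k^2 C(2k,k)) - 2*∑_{k=1}^N (-1)^k/k^4 + ∑_{k=1}^N (-1)^{N+k} (N-k)! ((k-1)!)^2 H_{k-1}(2) / (N+k)!. -/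
def H2 (n : ℕ) : ℚ := ∑ j ∈ Finset.Icc 1 n, 1 / (j : ℚ) ^ 2

/-! By induction on `N`. Write `t N k` for the coefficient of `H2 (k - 1)` in the last sum and
`s N k = t N k / (N + k + 1)`; then `t (N + 1) k = t N k - 2 (N + 1) s N k`, so the increment of the
last sum is governed by `∑ₖ s N k H2 (k - 1)`. The `s N k` telescope: with `g N k = (N + 1 - k) t N k`
one has `(N + 1)² s N k = g N k - g N (k + 1)` and `g N (k + 1) = -k² s N k`. Hence, after expanding
`H2 (k - 1)` and exchanging the double sum, each tail sum `∑_{k > j} s N k` cancels the weight `1 / j²`,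
and what remains is a closed form in `C(2N, N)` and `H2 N`. -/

open Finset

namespace CentralBinomZeta4

lemma H2_pred (k : ℕ) : H2 (k - 1) = ∑ j ∈ Ico 1 k, 1 / (j : ℚ) ^ 2 := by
  cases k with
  | zero => simp [H2]
  | succ k => rw [H2, Nat.add_sub_cancel, Ico_add_one_right_eq_Icc]

lemma sum_mul_H2_pred (f : ℕ → ℚ) (N : ℕ) :
    ∑ k ∈ Icc 1 N, f k * H2 (k - 1) = ∑ j ∈ Ico 1 N, (∑ k ∈ Ioc j N, f k) / (j : ℚ) ^ 2 := by
  simp_rw [H2_pred, mul_sum, mul_one_div, sum_div]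
  exact sum_comm' fun k j => by simp only [mem_Icc, mem_Ico, mem_Ioc]; omega

def t (N k : ℕ) : ℚ :=
  (-1) ^ (N + k) * ((N - k).factorial : ℚ) * ((k - 1).factorial : ℚ) ^ 2 / ((N + k).factorial : ℚ)

def s (N k : ℕ) : ℚ := t N k / (N + k + 1)

def g (N k : ℕ) : ℚ := ((N : ℚ) + 1 - k) * t N k

lemma t_succ_left {N k : ℕ} (hk : k ≤ N) : t (N + 1) k = t N k - 2 * (N + 1) * s N k := by
  rw [s, t, t, Nat.succ_sub hk, show N + 1 + k = N + k + 1 by ring, Nat.factorial_succ (N - k),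
    Nat.factorial_succ (N + k)]
  push_cast [Nat.cast_sub hk]
  field_simp
  ring

lemma g_succ_right {N k : ℕ} (hk : 1 ≤ k) (hkN : k < N) : g N (k + 1) = -(k : ℚ) ^ 2 * s N k := by
  obtain ⟨m, rfl⟩ := Nat.exists_eq_add_of_le' hk
  rw [g, s, t, t, show N - (m + 1) = N - (m + 1 + 1) + 1 by omega, Nat.add_sub_cancel,
    Nat.add_sub_cancel, show N + (m + 1 + 1) = N + (m + 1) + 1 by ring,
    Nat.factorial_succ (N - _), Nat.factorial_succ m, Nat.factorial_succ (N + (m + 1))]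
  push_cast [Nat.cast_sub hkN]
  field_simp
  ring

lemma s_eq_g_sub_g_succ_right {N k : ℕ} (hk : 1 ≤ k) (hkN : k < N) :
    s N k = (g N k - g N (k + 1)) / (N + 1) ^ 2 := by
  have ht : t N k = (N + k + 1) * s N k := by rw [s]; field_simp
  rw [g_succ_right hk hkN, g, ht]
  field_simp
  ring

lemma sum_Ico_s_eq {N j : ℕ} (hj : 1 ≤ j) (hjN : j ≤ N) :
    ∑ k ∈ Ico j N, s N k = (g N j - g N N) / (N + 1) ^ 2 := by
  have h : ∀ k ∈ Ico j N, s N k = -(g N (k + 1) - g N k) / (N + 1) ^ 2 := fun k hk => by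
    rw [mem_Ico] at hk
    rw [s_eq_g_sub_g_succ_right (by omega) hk.2]
    ring
  rw [sum_congr rfl h, ← sum_div, sum_neg_distrib, sum_Ico_sub (g N) hjN]
  ring

lemma sum_s_mul_H2 {N : ℕ} (hN : 1 ≤ N) :
    ∑ k ∈ Icc 1 N, s N k * H2 (k - 1)
      = -(g N 1 - g N N) / (N + 1) ^ 4 + (s N N - g N N / (N + 1) ^ 2) * H2 (N - 1) := by
  have tail : ∀ j ∈ Ico 1 N, (∑ k ∈ Ioc j N, s N k) / (j : ℚ) ^ 2
      = -s N j / (N + 1) ^ 2 + (s N N - g N N / (N + 1) ^ 2) * (1 / (j : ℚ) ^ 2) := by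
    intro j hj
    rw [mem_Ico] at hj
    rw [← Ico_add_one_add_one_eq_Ioc, sum_Ico_succ_top (by omega),
      sum_Ico_s_eq (j := j + 1) (by omega) hj.2, g_succ_right hj.1 hj.2]
    have : (j : ℚ) ≠ 0 := by have := hj.1; positivity
    field_simp
    ring
  rw [sum_mul_H2_pred, sum_congr rfl tail, sum_add_distrib, ← sum_div, sum_neg_distrib,
    sum_Ico_s_eq le_rfl hN, ← mul_sum, ← H2_pred]
  field_simp

lemma g_one {N : ℕ} (hN : 1 ≤ N) : g N 1 = (-1) ^ (N + 1) / (N + 1) := by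
  obtain ⟨n, rfl⟩ := Nat.exists_eq_add_of_le' hN
  simp [g, t, Nat.factorial_succ]
  field_simp

lemma t_self {N : ℕ} (hN : 1 ≤ N) : t N N = 1 / (N ^ 2 * (2 * N).choose N) := by
  obtain ⟨n, rfl⟩ := Nat.exists_eq_add_of_le' hN
  rw [t, Nat.sub_self, Nat.add_sub_cancel, Nat.cast_choose ℚ (by omega : n + 1 ≤ 2 * (n + 1)),
    show 2 * (n + 1) - (n + 1) = n + 1 by omega, ← two_mul, pow_mul]
  simp [Nat.factorial_succ]
  field_simp

lemma sum_t_mul_H2_succ (N : ℕ) :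
    ∑ k ∈ Icc 1 (N + 1), t (N + 1) k * H2 (k - 1)
      = ∑ k ∈ Icc 1 N, t N k * H2 (k - 1) - 2 * (N + 1) * ∑ k ∈ Icc 1 N, s N k * H2 (k - 1)
        + t (N + 1) (N + 1) * H2 N := by
  rw [sum_Icc_succ_top (by omega), Nat.add_sub_cancel, mul_sum, ← sum_sub_distrib]
  congr 1
  refine sum_congr rfl fun k hk => ?_
  rw [t_succ_left (mem_Icc.1 hk).2]
  ring

lemma sum_t_mul_H2_succ_sub (N : ℕ) :
    ∑ k ∈ Icc 1 (N + 1), t (N + 1) k * H2 (k - 1) - ∑ k ∈ Icc 1 N, t N k * H2 (k - 1)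
      = 4 / (((N : ℚ) + 1) ^ 4 * (2 * (N + 1)).choose (N + 1))
        - 3 * H2 N / (((N : ℚ) + 1) ^ 2 * (2 * (N + 1)).choose (N + 1))
        + 2 * (-1) ^ (N + 1) / ((N : ℚ) + 1) ^ 4 := by
  rcases Nat.eq_zero_or_pos N with rfl | hN
  · norm_num [t, H2]
  have hC0 : ((2 * N).choose N : ℚ) ≠ 0 := by exact_mod_cast (Nat.choose_pos (by omega)).ne'
  have hC : ((2 * (N + 1)).choose (N + 1) : ℚ) = 2 * (2 * N + 1) * (2 * N).choose N / (N + 1) := by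
    rw [eq_div_iff (by positivity), mul_comm]
    exact_mod_cast Nat.succ_mul_centralBinom_succ N
  have hH : H2 N = H2 (N - 1) + 1 / (N : ℚ) ^ 2 := by
    obtain ⟨n, rfl⟩ := Nat.exists_eq_add_of_le' hN
    rw [H2, sum_Icc_succ_top (by omega), Nat.add_sub_cancel, H2]
  rw [sum_t_mul_H2_succ, sum_s_mul_H2 hN, g_one hN, g, s, t_self hN, t_self (by omega : 1 ≤ N + 1),
    hH, hC]
  push_cast
  field_simp
  ring

lemma sum_t_mul_H2 (N : ℕ) :
    ∑ k ∈ Icc 1 N, t N k * H2 (k - 1)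
      = 4 * ∑ k ∈ Icc 1 N, 1 / ((k : ℚ) ^ 4 * (2 * k).choose k)
        - 3 * ∑ k ∈ Icc 1 N, H2 (k - 1) / ((k : ℚ) ^ 2 * (2 * k).choose k)
        + 2 * ∑ k ∈ Icc 1 N, (-1 : ℚ) ^ k / (k : ℚ) ^ 4 := by
  induction N with
  | zero => simp
  | succ N ih =>
    rw [eq_add_of_sub_eq (sum_t_mul_H2_succ_sub N), ih, sum_Icc_succ_top (by omega),
      sum_Icc_succ_top (by omega), sum_Icc_succ_top (by omega), Nat.add_sub_cancel]
    push_cast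
    ring

end CentralBinomZeta4

theorem stmt_15_general (N : ℕ) :
    4 * ∑ k ∈ Finset.Icc 1 N, 1 / ((k : ℚ) ^ 4 * (Nat.choose (2 * k) k : ℚ))
      = 3 * ∑ k ∈ Finset.Icc 1 N, H2 (k - 1) / ((k : ℚ) ^ 2 * (Nat.choose (2 * k) k : ℚ))
        - 2 * ∑ k ∈ Finset.Icc 1 N, (-1 : ℚ) ^ k / (k : ℚ) ^ 4
        + ∑ k ∈ Finset.Icc 1 N,
            (-1 : ℚ) ^ (N + k) * ((N - k).factorial : ℚ) * (((k - 1).factorial : ℚ)) ^ 2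
              * H2 (k - 1) / ((N + k).factorial : ℚ) := by
  have h := CentralBinomZeta4.sum_t_mul_H2 N
  simp only [CentralBinomZeta4.t, div_mul_eq_mul_div] at h
  linarith

theorem stmt_15 (N : ℕ) (hN : 1 ≤ N) :
    4 * ∑ k ∈ Finset.Icc 1 N, 1 / ((k : ℚ) ^ 4 * (Nat.choose (2 * k) k : ℚ))
      = 3 * ∑ k ∈ Finset.Icc 1 N, H2 (k - 1) / ((k : ℚ) ^ 2 * (Nat.choose (2 * k) k : ℚ))
        - 2 * ∑ k ∈ Finset.Icc 1 N, (-1 : ℚ) ^ k / (k : ℚ) ^ 4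
        + ∑ k ∈ Finset.Icc 1 N,
            (-1 : ℚ) ^ (N + k) * ((N - k).factorial : ℚ) * (((k - 1).factorial : ℚ)) ^ 2
              * H2 (k - 1) / ((N + k).factorial : ℚ) :=
  stmt_15_general N
end

section
/- For every positive integer N, 2*∑_{k=1}^N (-1)^{k-1}/(k^5 C(2k,k)) - (5/2)*∑_{k=1}^N (-1)^{k-1} H_{k-1}(2)/(k^3 C(2k,k)) = ∑_{k=1}^N 1/k^5 + (1/2)*∑_{k=1}^N (-1)^k (N-k)! ((k-1)!)^2 H_{k-1}(2) / (k * (N+k)!). -/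
open Finset

lemma H2_zero : H2 0 = 0 := by simp [H2]

lemma H2_succ (n : ℕ) : H2 (n + 1) = H2 n + 1 / ((n : ℚ) + 1) ^ 2 := by
  rw [H2, H2, sum_Icc_succ_top (Nat.le_add_left 1 n)]
  push_cast
  ring

def remainderTerm (N k : ℕ) : ℚ :=
  (-1 : ℚ) ^ k * ((N - k).factorial : ℚ) * (((k - 1).factorial : ℚ)) ^ 2
    * H2 (k - 1) / ((k : ℚ) * ((N + k).factorial : ℚ))

def remainderDiff (N k : ℕ) : ℚ :=
  (-1 : ℚ) ^ k * (((k - 1).factorial : ℚ)) ^ 2 * H2 (k - 1) * ((N - k).factorial : ℚ)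
    / ((N + 1 + k).factorial : ℚ)

def remainderAntidiff (N k : ℕ) : ℚ :=
  (-1 : ℚ) ^ (k + 1) * ((N + 1 - k).factorial : ℚ) * (((k - 1).factorial : ℚ)) ^ 2
    * (H2 (k - 1) * ((N : ℚ) + 1) ^ 2 - 1)
    / (((N + k).factorial : ℚ) * ((N : ℚ) + 1) ^ 4)

lemma remainderTerm_succ_left {N k : ℕ} (hk : 1 ≤ k) (hkN : k ≤ N) :
    remainderTerm (N + 1) k = remainderTerm N k - 2 * remainderDiff N k := by
  obtain ⟨j, rfl⟩ := Nat.exists_eq_add_of_le' hk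
  unfold remainderTerm remainderDiff
  rw [Nat.succ_sub hkN, add_right_comm N 1, Nat.factorial_succ (N - _),
    Nat.factorial_succ (N + _), Nat.add_sub_cancel]
  have hfac := (N + (j + 1)).factorial_pos
  push_cast [Nat.cast_sub hkN]
  field_simp
  ring

lemma remainderDiff_eq_sub {N k : ℕ} (hk : 1 ≤ k) (hkN : k ≤ N) :
    remainderDiff N k = remainderAntidiff N (k + 1) - remainderAntidiff N k := by
  obtain ⟨j, rfl⟩ := Nat.exists_eq_add_of_le' hk
  unfold remainderDiff remainderAntidiff
  rw [Nat.add_sub_cancel, Nat.add_sub_cancel, Nat.add_sub_add_right, Nat.succ_sub hkN,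
    Nat.factorial_succ (N - _), H2_succ, Nat.factorial_succ j,
    show N + 1 + (j + 1) = N + (j + 1) + 1 by ring,
    show N + (j + 1 + 1) = N + (j + 1) + 1 by ring,
    Nat.factorial_succ (N + (j + 1))]
  have hfac := (N + (j + 1)).factorial_pos
  push_cast [Nat.cast_sub hkN]
  field_simp
  ring

lemma sum_remainderDiff (N : ℕ) :
    ∑ k ∈ Icc 1 N, remainderDiff N k = remainderAntidiff N (N + 1) - remainderAntidiff N 1 := by
  rw [← Ico_add_one_right_eq_Icc, sum_Ico_eq_sum_range,
    ← sum_range_sub (fun i => remainderAntidiff N (i + 1))]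
  refine sum_congr (by simp) fun i hi => ?_
  rw [add_comm 1 i]
  exact remainderDiff_eq_sub (by omega) (by simp at hi; omega)

lemma sum_remainderTerm_succ_left (N : ℕ) :
    ∑ k ∈ Icc 1 N, remainderTerm (N + 1) k
      = ∑ k ∈ Icc 1 N, remainderTerm N k
        - 2 * (remainderAntidiff N (N + 1) - remainderAntidiff N 1) := by
  rw [← sum_remainderDiff, mul_sum, ← sum_sub_distrib]
  refine sum_congr rfl fun k hk => ?_
  rw [mem_Icc] at hk
  exact remainderTerm_succ_left hk.1 hk.2

lemma succ_terms_balance (N : ℕ) :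
    2 * ((-1 : ℚ) ^ (N + 1 - 1) / (((N + 1 : ℕ) : ℚ) ^ 5 * (Nat.choose (2 * (N + 1)) (N + 1) : ℚ)))
      - 5 / 2 * ((-1 : ℚ) ^ (N + 1 - 1) * H2 (N + 1 - 1)
          / (((N + 1 : ℕ) : ℚ) ^ 3 * (Nat.choose (2 * (N + 1)) (N + 1) : ℚ)))
      = 1 / ((N + 1 : ℕ) : ℚ) ^ 5 + 1 / 2 * remainderTerm (N + 1) (N + 1)
        - (remainderAntidiff N (N + 1) - remainderAntidiff N 1) := by
  unfold remainderTerm remainderAntidiff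
  rw [Nat.cast_choose ℚ (by omega), Nat.add_sub_cancel, Nat.sub_self, Nat.sub_self,
    show 2 * (N + 1) - (N + 1) = N + 1 by omega, show 2 * (N + 1) = 2 * N + 1 + 1 by ring,
    show N + 1 + (N + 1) = 2 * N + 1 + 1 by ring, show N + (N + 1) = 2 * N + 1 by ring,
    Nat.factorial_succ (2 * N + 1), Nat.factorial_succ N]
  simp only [H2_zero, Nat.factorial_zero, Nat.cast_one, pow_succ (-1 : ℚ)]
  have hfac := N.factorial_pos
  have hfac' := (2 * N + 1).factorial_pos
  push_cast
  field_simp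
  ring

theorem stmt_16_general (N : ℕ) :
    2 * ∑ k ∈ Finset.Icc 1 N, (-1 : ℚ) ^ (k - 1) / ((k : ℚ) ^ 5 * (Nat.choose (2 * k) k : ℚ))
      - 5 / 2 * ∑ k ∈ Finset.Icc 1 N,
          (-1 : ℚ) ^ (k - 1) * H2 (k - 1) / ((k : ℚ) ^ 3 * (Nat.choose (2 * k) k : ℚ))
      = ∑ k ∈ Finset.Icc 1 N, 1 / (k : ℚ) ^ 5
        + 1 / 2 * ∑ k ∈ Finset.Icc 1 N,
            (-1 : ℚ) ^ k * ((N - k).factorial : ℚ) * (((k - 1).factorial : ℚ)) ^ 2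
              * H2 (k - 1) / ((k : ℚ) * ((N + k).factorial : ℚ)) := by
  change _ = _ + 1 / 2 * ∑ k ∈ Icc 1 N, remainderTerm N k
  induction N with
  | zero => simp
  | succ N ih =>
    simp only [sum_Icc_succ_top (Nat.le_add_left 1 N), sum_remainderTerm_succ_left]
    linarith [succ_terms_balance N]

theorem stmt_16 (N : ℕ) (hN : 1 ≤ N) :
    2 * ∑ k ∈ Finset.Icc 1 N, (-1 : ℚ) ^ (k - 1) / ((k : ℚ) ^ 5 * (Nat.choose (2 * k) k : ℚ))
      - 5 / 2 * ∑ k ∈ Finset.Icc 1 N,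
          (-1 : ℚ) ^ (k - 1) * H2 (k - 1) / ((k : ℚ) ^ 3 * (Nat.choose (2 * k) k : ℚ))
      = ∑ k ∈ Finset.Icc 1 N, 1 / (k : ℚ) ^ 5
        + 1 / 2 * ∑ k ∈ Finset.Icc 1 N,
            (-1 : ℚ) ^ k * ((N - k).factorial : ℚ) * (((k - 1).factorial : ℚ)) ^ 2
              * H2 (k - 1) / ((k : ℚ) * ((N + k).factorial : ℚ)) :=
  stmt_16_general N
end

section
/- For every positive integer N, ∑_{k=1}^N 1/k^2 = ∑_{k=1}^N (21k-8)/(k^3 C(2k,k)^3) - ∑_{k=1}^N k! ((k-1)!)^3 (N!)^2 (2N+3k) / ((2k)! ((k+N)!)^2). -/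
/-!
`wzF n k` is the subtracted summand and `wzG` its WZ mate: `wzF (n+1) k - wzF n k` telescopes
in `k` to `wzG n n - wzG n 0`. Summing over `1 ≤ k ≤ n` therefore gives
`S (n+1) = S n + (wzF (n+1) (n+1) + wzG n n) - wzG n 0` for `S n = ∑_{k=1}^n wzF n k`, and the two
boundary terms are exactly `(21(n+1) - 8) / ((n+1)^3 C(2n+2, n+1)^3)` and `1 / (n+1)^2`.
At `N = 0` all sums are empty, so induction on `N` gives the identity.
-/

open Finset Nat

noncomputable def wzF (n k : ℕ) : ℚ :=
  (k ! : ℚ) * ((k - 1)! : ℚ) ^ 3 * (n ! : ℚ) ^ 2 * (2 * n + 3 * k : ℚ)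
    / ((2 * k)! * ((k + n)! : ℚ) ^ 2)

noncomputable def wzG (n k : ℕ) : ℚ :=
  (k ! : ℚ) ^ 4 * (n ! : ℚ) ^ 2 / ((2 * k)! * ((k + n + 1)! : ℚ) ^ 2)

theorem wzF_succ_sub_wzF (n j : ℕ) :
    wzF (n + 1) (j + 1) - wzF n (j + 1) = wzG n (j + 1) - wzG n j := by
  have h2j : (2 * (j + 1))! = (2 * j + 2) * ((2 * j + 1) * (2 * j)!) := by
    rw [show 2 * (j + 1) = 2 * j + 1 + 1 by ring, factorial_succ, factorial_succ]
  have hjn : (j + 1 + (n + 1))! = (j + n + 2) * (j + n + 1)! := by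
    rw [show j + 1 + (n + 1) = j + n + 1 + 1 by ring, factorial_succ]
  simp only [wzF, wzG, h2j, hjn, factorial_succ, add_tsub_cancel_right,
    show j + 1 + n = j + n + 1 by ring]
  have := factorial_pos j
  have := factorial_pos n
  have := factorial_pos (2 * j)
  have := factorial_pos (j + n + 1)
  push_cast
  field_simp
  ring

theorem wzG_zero (n : ℕ) : wzG n 0 = 1 / ((n : ℚ) + 1) ^ 2 := by
  have := factorial_pos n
  simp only [wzG, zero_add, mul_zero, factorial_zero, factorial_succ]
  push_cast
  field_simp

theorem sum_wzF_succ (n : ℕ) :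
    ∑ k ∈ Icc 1 (n + 1), wzF (n + 1) k
      = ∑ k ∈ Icc 1 n, wzF n k + wzF (n + 1) (n + 1) + wzG n n - wzG n 0 := by
  have telescope : ∑ k ∈ Icc 1 n, (wzF (n + 1) k - wzF n k) = wzG n n - wzG n 0 := by
    have := sum_Ico_sub (f := fun i => wzG n (i - 1)) (show 1 ≤ n + 1 by omega)
    simp only [add_tsub_cancel_right, tsub_self, Ico_add_one_right_eq_Icc] at this
    rw [← this]
    refine sum_congr rfl fun k hk => ?_
    obtain ⟨j, rfl⟩ : ∃ j, k = j + 1 := ⟨k - 1, by grind⟩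
    simpa using wzF_succ_sub_wzF n j
  rw [sum_Icc_succ_top (by omega), sum_sub_distrib] at *
  linarith

theorem wzF_diag_add_wzG_diag (n : ℕ) :
    wzF (n + 1) (n + 1) + wzG n n
      = (21 * ((n + 1 : ℕ) : ℚ) - 8)
          / (((n + 1 : ℕ) : ℚ) ^ 3 * ((2 * (n + 1)).choose (n + 1) : ℚ) ^ 3) := by
  have h2n : (2 * (n + 1))! = (2 * n + 2) * ((2 * n + 1) * (2 * n)!) := by
    rw [show 2 * (n + 1) = 2 * n + 1 + 1 by ring, factorial_succ, factorial_succ]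
  rw [cast_choose ℚ (by omega), show 2 * (n + 1) - (n + 1) = n + 1 by omega]
  simp only [wzF, wzG, h2n, factorial_succ, add_tsub_cancel_right,
    show n + 1 + (n + 1) = 2 * n + 1 + 1 by ring, show n + n + 1 = 2 * n + 1 by ring]
  have := factorial_pos n
  have := factorial_pos (2 * n)
  push_cast
  field_simp
  ring

theorem stmt_17_general (N : ℕ) :
    ∑ k ∈ Finset.Icc 1 N, 1 / (k : ℚ) ^ 2
      = ∑ k ∈ Finset.Icc 1 N, (21 * k - 8 : ℚ) / ((k : ℚ) ^ 3 * (Nat.choose (2 * k) k : ℚ) ^ 3)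
        - ∑ k ∈ Finset.Icc 1 N,
            (k.factorial : ℚ) * (((k - 1).factorial : ℚ)) ^ 3 * ((N.factorial : ℚ)) ^ 2
              * (2 * N + 3 * k : ℚ)
              / (((2 * k).factorial : ℚ) * (((k + N).factorial : ℚ)) ^ 2) := by
  change _ = _ - ∑ k ∈ Icc 1 N, wzF N k
  induction N with
  | zero => simp
  | succ n ih =>
    rw [sum_Icc_succ_top (by omega), sum_Icc_succ_top (by omega), sum_wzF_succ, wzG_zero,
      ← wzF_diag_add_wzG_diag, ih]
    push_cast
    ring

theorem stmt_17 (N : ℕ) (hN : 1 ≤ N) :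
    ∑ k ∈ Finset.Icc 1 N, 1 / (k : ℚ) ^ 2
      = ∑ k ∈ Finset.Icc 1 N, (21 * k - 8 : ℚ) / ((k : ℚ) ^ 3 * (Nat.choose (2 * k) k : ℚ) ^ 3)
        - ∑ k ∈ Finset.Icc 1 N,
            (k.factorial : ℚ) * (((k - 1).factorial : ℚ)) ^ 3 * ((N.factorial : ℚ)) ^ 2
              * (2 * N + 3 * k : ℚ)
              / (((2 * k).factorial : ℚ) * (((k + N).factorial : ℚ)) ^ 2) :=
  stmt_17_general N
end

section
/- Define the rational sequence b_{m,k} for m,k ≥ 0 by b_{0,k} = 1 for all k ≥ 0, b_{m,0} = 0 for m ≥ 1, and b_{m,k} = ∑_{j=0}^m (-1)^j (j+1) b_{m-j,k-1} / k^j for m ≥ 0, k ≥ 1. Then b_{1,k} = -2*H_k(1), b_{2,k} = 3*H_k(1)^2 - 2*H_k(1,1), and b_{3,k} = 6*H_k(1)*H_k(1,1) - 2*H_k(1,1,1) - 4*H_k(1)^3 for all k ≥ 0. -/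
/-!
Writing `x = 1/(k+1)`, the recursion says that the generating function `∑ₘ b m k aᵐ` gets
multiplied by `(1 + a x)⁻² = ∑ⱼ (-1)ʲ (j+1) (a x)ʲ` when `k` increases by one, while
`H₁, H₁₁, H₁₁₁` grow by `x, H₁ x, H₁₁ x`. So the coefficients of `a, a², a³` satisfy explicit
first-order recurrences in `k`, and the three closed forms follow by induction on `k`,
each using the previous ones.
-/

def b : ℕ → ℕ → ℚ
  | 0, _ => 1
  | _ + 1, 0 => 0
  | m + 1, k + 1 =>
      ∑ j ∈ Finset.range (m + 2), (-1 : ℚ) ^ j * (j + 1) / ((k : ℚ) + 1) ^ j * b (m + 1 - j) k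
  termination_by m k => k

def H1 (k : ℕ) : ℚ := ∑ j ∈ Finset.Icc 1 k, 1 / (j : ℚ)

def H11 (k : ℕ) : ℚ :=
  ∑ j ∈ Finset.Icc 1 k, (∑ i ∈ Finset.Icc 1 (j - 1), 1 / (i : ℚ)) / (j : ℚ)

def H111 (k : ℕ) : ℚ :=
  ∑ l ∈ Finset.Icc 1 k,
    (∑ j ∈ Finset.Icc 1 (l - 1), (∑ i ∈ Finset.Icc 1 (j - 1), 1 / (i : ℚ)) / (j : ℚ))
      / (l : ℚ)

lemma H1_succ (k : ℕ) : H1 (k + 1) = H1 k + 1 / ((k : ℚ) + 1) := by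
  simp [H1, Finset.sum_Icc_succ_top (Nat.le_add_left 1 k)]

lemma H11_succ (k : ℕ) : H11 (k + 1) = H11 k + H1 k / ((k : ℚ) + 1) := by
  simp [H11, H1, Finset.sum_Icc_succ_top (Nat.le_add_left 1 k)]

lemma H111_succ (k : ℕ) : H111 (k + 1) = H111 k + H11 k / ((k : ℚ) + 1) := by
  simp [H111, H11, Finset.sum_Icc_succ_top (Nat.le_add_left 1 k)]

lemma b_zero_left (k : ℕ) : b 0 k = 1 := by
  rw [b]

lemma b_succ_zero (m : ℕ) : b (m + 1) 0 = 0 := by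
  rw [b]

lemma b_one_succ (k : ℕ) : b 1 (k + 1) = b 1 k - 2 / ((k : ℚ) + 1) := by
  rw [b]
  simp [Finset.sum_range_succ, b_zero_left]
  ring

lemma b_two_succ (k : ℕ) :
    b 2 (k + 1) = b 2 k - 2 / ((k : ℚ) + 1) * b 1 k + 3 / ((k : ℚ) + 1) ^ 2 := by
  rw [b]
  simp [Finset.sum_range_succ, b_zero_left]
  ring

lemma b_three_succ (k : ℕ) :
    b 3 (k + 1) = b 3 k - 2 / ((k : ℚ) + 1) * b 2 k + 3 / ((k : ℚ) + 1) ^ 2 * b 1 k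
      - 4 / ((k : ℚ) + 1) ^ 3 := by
  rw [b]
  simp [Finset.sum_range_succ, b_zero_left]
  ring

lemma b_one (k : ℕ) : b 1 k = -2 * H1 k := by
  induction k with
  | zero => simp [b_succ_zero, H1]
  | succ k ih => rw [b_one_succ, H1_succ, ih]; ring

lemma b_two (k : ℕ) : b 2 k = 3 * H1 k ^ 2 - 2 * H11 k := by
  induction k with
  | zero => simp [b_succ_zero, H1, H11]
  | succ k ih =>
    rw [b_two_succ, H1_succ, H11_succ, ih, b_one]
    field_simp
    ring

lemma b_three (k : ℕ) : b 3 k = 6 * H1 k * H11 k - 2 * H111 k - 4 * H1 k ^ 3 := by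
  induction k with
  | zero => simp [b_succ_zero, H1, H11, H111]
  | succ k ih =>
    rw [b_three_succ, H1_succ, H11_succ, H111_succ, ih, b_two, b_one]
    field_simp
    ring

theorem stmt_19 (k : ℕ) :
    b 1 k = -2 * H1 k ∧
    b 2 k = 3 * (H1 k) ^ 2 - 2 * H11 k ∧
    b 3 k = 6 * H1 k * H11 k - 2 * H111 k - 4 * (H1 k) ^ 3 :=
  ⟨b_one k, b_two k, b_three k⟩
end
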